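/- arXiv:1409.4346 — 3 statements merged into one kernel-verified Lean document; each statement's English description precedes it below -/
import Mathlib

section
/- Let φ : ℝⁿ → ℝ be an even convex function and t ∈ ℝ be such that the sublevel set {x : φ(x) ≤ t} and the minimum level set {x : φ(x) = φ(0)} are both convex bodies. Then there exists b > 0, depending only on φ and t, such that for every unit vector u and all r, s ∈ ℝ with φ(0) < r < s ≤ t, one has s − r ≤ b · ( h_{{φ≤s}}(u) − h_{{φ≤r}}(u) ), where h_A denotes the support function of the set A. -/
open MeasureTheory Set Pointwise

noncomputable section

/-- A convex body in `ℝⁿ`: a compact convex set with nonempty interior. -/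
def IsConvexBody {n : ℕ} (K : Set (EuclideanSpace ℝ (Fin n))) : Prop :=
  Convex ℝ K ∧ IsCompact K ∧ (interior K).Nonempty

/-- The support function of a set. -/
def suppFun {n : ℕ} (K : Set (EuclideanSpace ℝ (Fin n)))
    (u : EuclideanSpace ℝ (Fin n)) : ℝ :=
  sSup ((fun y => (inner ℝ u y : ℝ)) '' K)

/-- The logarithmic combination `λ·K +₀ (1-λ)·L`. -/
def logComb {n : ℕ} (lam : ℝ) (K L : Set (EuclideanSpace ℝ (Fin n))) :
    Set (EuclideanSpace ℝ (Fin n)) :=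
  {x | ∀ u : EuclideanSpace ℝ (Fin n), ‖u‖ = 1 →
    (inner ℝ x u : ℝ) ≤ suppFun K u ^ lam * suppFun L u ^ (1 - lam)}

/-- An even log-concave density on `ℝⁿ`. -/
def IsEvenLogConcaveDensity {n : ℕ} (f : EuclideanSpace ℝ (Fin n) → ℝ) : Prop :=
  Integrable f volume ∧ (∀ x, 0 ≤ f x) ∧ (∀ x, f (-x) = f x) ∧
  ∀ x y : EuclideanSpace ℝ (Fin n), ∀ lam : ℝ, lam ∈ Set.Ioo (0:ℝ) 1 →
    f x ^ lam * f y ^ (1 - lam) ≤ f (lam • x + (1 - lam) • y)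

/-!
Let `K_a = {φ ≤ a}` and let `M ≥ t` bound `φ` on the `1`-neighbourhood of `K_t`. If `x ∈ K_r`
attains `h_{K_r}(u)`, convexity along the segment from `x` to `x + u` gives
`φ (x + c • u) ≤ r + c (M - r) ≤ s` for `c = (s - r) / b` with `b ≥ M - φ 0`, so
`h_{K_s}(u) ≥ ⟪u, x + c • u⟫ = h_{K_r}(u) + c`.
-/

open Bornology Metric

lemma Bornology.IsBounded.bddAbove_image_of_continuous {α : Type*} [PseudoMetricSpace α]
    [ProperSpace α] {K : Set α} {f : α → ℝ} (hK : IsBounded K) (hf : Continuous f) :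
    BddAbove (f '' K) :=
  (hK.isCompact_closure.bddAbove_image hf.continuousOn).mono (image_mono subset_closure)

lemma ConvexOn.map_add_smul_le {E : Type*} [AddCommGroup E] [Module ℝ E] {f : E → ℝ}
    (hf : ConvexOn ℝ univ f) (x v : E) {c : ℝ} (hc₀ : 0 ≤ c) (hc₁ : c ≤ 1) :
    f (x + c • v) ≤ (1 - c) * f x + c * f (x + v) := by
  have hx : x + c • v = (1 - c) • x + c • (x + v) := by
    rw [smul_add, sub_smul, one_smul]; abel
  rw [hx]
  exact hf.2 (mem_univ _) (mem_univ _) (by linarith) hc₀ (by ring)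

section SupportFunction

variable {n : ℕ} {K : Set (EuclideanSpace ℝ (Fin n))}

lemma inner_le_suppFun (hK : IsBounded K) (u : EuclideanSpace ℝ (Fin n))
    {y : EuclideanSpace ℝ (Fin n)} (hy : y ∈ K) : inner ℝ u y ≤ suppFun K u :=
  le_csSup (hK.bddAbove_image_of_continuous (by fun_prop)) (mem_image_of_mem _ hy)

lemma IsCompact.exists_suppFun_eq_inner (hK : IsCompact K) (hne : K.Nonempty)
    (u : EuclideanSpace ℝ (Fin n)) : ∃ x ∈ K, suppFun K u = inner ℝ u x := by
  obtain ⟨x, hx, hmax⟩ :=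
    hK.exists_isMaxOn hne (f := fun y => inner ℝ u y) (by fun_prop)
  exact ⟨x, hx, IsGreatest.csSup_eq ⟨mem_image_of_mem _ hx, forall_mem_image.2 hmax⟩⟩

lemma suppFun_sublevel_add_le {φ : EuclideanSpace ℝ (Fin n) → ℝ} (hφ : ConvexOn ℝ univ φ)
    {r s M c : ℝ} (hr : IsCompact {x | φ x ≤ r}) (hr_ne : {x | φ x ≤ r}.Nonempty)
    (hs : IsBounded {x | φ x ≤ s}) {u : EuclideanSpace ℝ (Fin n)} (hu : ‖u‖ = 1)
    (hM : ∀ x, φ x ≤ r → φ (x + u) ≤ M) (hc₀ : 0 ≤ c) (hc₁ : c ≤ 1)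
    (hcs : r + c * (M - r) ≤ s) :
    suppFun {x | φ x ≤ r} u + c ≤ suppFun {x | φ x ≤ s} u := by
  obtain ⟨x, hxr, hx⟩ := hr.exists_suppFun_eq_inner hr_ne u
  have hxr : φ x ≤ r := hxr
  have hys : φ (x + c • u) ≤ s := by
    have hseg := hφ.map_add_smul_le x u hc₀ hc₁
    nlinarith [hM x hxr]
  calc suppFun {x | φ x ≤ r} u + c = inner ℝ u (x + c • u) := by
        rw [hx, inner_add_right, real_inner_smul_right, real_inner_self_eq_norm_sq, hu]; ring
    _ ≤ suppFun {x | φ x ≤ s} u := inner_le_suppFun hs u hys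

end SupportFunction

theorem sublevel_support_separation_general (n : ℕ)
    (φ : EuclideanSpace ℝ (Fin n) → ℝ)
    (hconv : ConvexOn ℝ Set.univ φ) (t : ℝ)
    (h1 : IsConvexBody {x | φ x ≤ t}) :
    ∃ b > (0:ℝ), ∀ u : EuclideanSpace ℝ (Fin n), ‖u‖ = 1 →
      ∀ r s : ℝ, φ 0 < r → r < s → s ≤ t →
        s - r ≤ b * (suppFun {x | φ x ≤ s} u - suppFun {x | φ x ≤ r} u) := by
  have hcont : Continuous φ := continuousOn_univ.mp (hconv.continuousOn isOpen_univ)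
  have hKt : IsBounded {x | φ x ≤ t} := h1.2.1.isBounded
  obtain ⟨M₀, hM₀⟩ := (hKt.cthickening (δ := 1)).bddAbove_image_of_continuous hcont
  set M := max M₀ t
  set b := max 1 (M - φ 0)
  have hb : 0 < b := lt_max_of_lt_left one_pos
  refine ⟨b, hb, fun u hu r s hr hrs hst => ?_⟩
  have hM : ∀ x, φ x ≤ r → φ (x + u) ≤ M := fun x hx =>
    le_max_of_le_left <| hM₀ <| mem_image_of_mem φ <|
      mem_cthickening_of_dist_le _ x 1 _ (show φ x ≤ t by linarith) (by simp [hu])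
  set c := (s - r) / b
  have hc₀ : 0 ≤ c := div_nonneg (by linarith) hb.le
  have hbc : b * c = s - r := mul_div_cancel₀ _ hb.ne'
  have hc₁ : c ≤ 1 :=
    div_le_one_of_le₀ (by linarith [le_max_right M₀ t, le_max_right 1 (M - φ 0)]) hb.le
  have hcs : r + c * (M - r) ≤ s := by nlinarith [le_max_right 1 (M - φ 0)]
  have hsub : ∀ a ≤ t, {x | φ x ≤ a} ⊆ {x | φ x ≤ t} := fun a ha x hx => le_trans hx ha
  have key := suppFun_sublevel_add_le hconv
    (isCompact_of_isClosed_isBounded (isClosed_le hcont continuous_const)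
      (hKt.subset (hsub r (by linarith))))
    ⟨0, hr.le⟩ (hKt.subset (hsub s hst)) hu hM hc₀ hc₁ hcs
  calc s - r = b * c := hbc.symm
    _ ≤ b * (suppFun {x | φ x ≤ s} u - suppFun {x | φ x ≤ r} u) := by gcongr; linarith

/-- Lemma 3.1: a quantitative separation of support functions of sublevel sets of an
even convex function. -/
theorem sublevel_support_separation (n : ℕ)
    (φ : EuclideanSpace ℝ (Fin n) → ℝ)
    (heven : ∀ x, φ (-x) = φ x) (hconv : ConvexOn ℝ Set.univ φ) (t : ℝ)
    (h1 : IsConvexBody {x | φ x ≤ t}) (h2 : IsConvexBody {x | φ x = φ 0}) :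
    ∃ b > (0:ℝ), ∀ u : EuclideanSpace ℝ (Fin n), ‖u‖ = 1 →
      ∀ r s : ℝ, φ 0 < r → r < s → s ≤ t →
        s - r ≤ b * (suppFun {x | φ x ≤ s} u - suppFun {x | φ x ≤ r} u) :=
  sublevel_support_separation_general n φ hconv t h1
end
end

section
/- Let λ ∈ (0,1), a₁, a₂ > 0, let μ be a Borel measure on ℝⁿ that is finite on compact sets, let φ : ℝⁿ → [0,∞) be an even convex function, and let K, L be symmetric convex bodies in ℝⁿ. Assume that for all r₁, r₂ > 0, μ( (λ·K +₀ (1−λ)·L) ∩ {φ ≤ r₁^λ r₂^{1−λ}} ) ≥ μ( K ∩ {φ ≤ r₁} )^λ · μ( L ∩ {φ ≤ r₂} )^{1−λ}. Then ∫_{λ·K +₀ (1−λ)·L} exp(−a₁^λ a₂^{1−λ} φ(x)) dμ(x) ≥ ( ∫_K exp(−a₁ φ(x)) dμ(x) )^λ · ( ∫_L exp(−a₂ φ(x)) dμ(x) )^{1−λ}. -/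
open MeasureTheory Set Pointwise

noncomputable section

/-!
Writing `∫_S e^{-aφ} dμ = ∫_ℝ a eᵘ e^{-a eᵘ} μ(S ∩ {φ ≤ eᵘ}) du` (layer cake in the level
`r = eᵘ`), the sublevel hypothesis and the inequality `(s e^{-s})^λ (t e^{-t})^{1-λ} ≤ m e^{-m}`
for `m = s^λ t^{1-λ}` (weighted AM–GM in the exponent) make the three integrands in `u` a
Prékopa–Leindler triple on `ℝ`. One-dimensional Prékopa–Leindler follows, after normalising the
suprema to `1`, from one-dimensional Brunn–Minkowski applied to the superlevel sets at heights
`t ∈ (0, 1)`. The logarithmic combination of compact sets is compact, so all integrals are finite.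
-/

open Real
open scoped ENNReal

theorem ENNReal.rpow_mul_rpow_le_add {l : ℝ} (hl : l ∈ Ioo (0 : ℝ) 1) (a b : ℝ≥0∞) :
    a ^ l * b ^ (1 - l) ≤ ENNReal.ofReal l * a + ENNReal.ofReal (1 - l) * b := by
  obtain ⟨hl0, hl1⟩ := hl
  have hl' : 0 ≤ 1 - l := by linarith
  rcases eq_or_ne a ∞ with rfl | ha
  · rw [ENNReal.mul_top (ENNReal.ofReal_pos.2 hl0).ne', top_add]
    exact le_top
  rcases eq_or_ne b ∞ with rfl | hb
  · rw [ENNReal.mul_top (ENNReal.ofReal_pos.2 (sub_pos.2 hl1)).ne', add_top]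
    exact le_top
  rw [← ENNReal.ofReal_toReal ha, ← ENNReal.ofReal_toReal hb,
    ENNReal.ofReal_rpow_of_nonneg ENNReal.toReal_nonneg hl0.le,
    ENNReal.ofReal_rpow_of_nonneg ENNReal.toReal_nonneg hl', ← ENNReal.ofReal_mul (by positivity),
    ← ENNReal.ofReal_mul hl0.le, ← ENNReal.ofReal_mul hl', ← ENNReal.ofReal_add (by positivity)
    (by positivity)]
  exact ENNReal.ofReal_le_ofReal (geom_mean_le_arith_mean2_weighted hl0.le hl'
    ENNReal.toReal_nonneg ENNReal.toReal_nonneg (by ring))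

theorem MeasureTheory.lintegral_eq_setLIntegral_Ioo_meas_lt {α : Type*} [MeasurableSpace α]
    (μ : Measure α) {f : α → ℝ≥0∞} (hf : Measurable f) (hf₁ : ∀ x, f x ≤ 1) :
    ∫⁻ x, f x ∂μ = ∫⁻ t in Ioo 0 1, μ {x | ENNReal.ofReal t < f x} := by
  have hf_ne_top x : f x ≠ ∞ := ne_top_of_le_ne_top ENNReal.one_ne_top (hf₁ x)
  have hvanish : ∀ t ∈ Ici (1 : ℝ), μ {x | t < (f x).toReal} = 0 := by
    intro t ht
    convert measure_empty (μ := μ)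
    refine eq_empty_of_forall_notMem fun x hx => ?_
    have : (f x).toReal ≤ 1 := ENNReal.toReal_le_of_le_ofReal zero_le_one (by simpa using hf₁ x)
    exact absurd hx (not_lt.2 (this.trans ht))
  calc ∫⁻ x, f x ∂μ = ∫⁻ x, ENNReal.ofReal (f x).toReal ∂μ := by
        simp_rw [ENNReal.ofReal_toReal (hf_ne_top _)]
    _ = ∫⁻ t in Ioi 0, μ {x | t < (f x).toReal} :=
        lintegral_eq_lintegral_meas_lt μ (ae_of_all _ fun _ => ENNReal.toReal_nonneg)
          hf.ennreal_toReal.aemeasurable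
    _ = ∫⁻ t in Ioo 0 1, μ {x | t < (f x).toReal} := by
        rw [← Ioo_union_Ici_eq_Ioi zero_lt_one,
          lintegral_union measurableSet_Ici (disjoint_left.2 fun _ ht ht' => not_le.2 ht.2 ht'),
          setLIntegral_congr_fun measurableSet_Ici hvanish, lintegral_zero, add_zero]
    _ = ∫⁻ t in Ioo 0 1, μ {x | ENNReal.ofReal t < f x} :=
        setLIntegral_congr_fun measurableSet_Ioo fun t ht => by
          simp_rw [ENNReal.ofReal_lt_iff_lt_toReal ht.1.le (hf_ne_top _)]

namespace Real

variable {l : ℝ}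

theorem brunn_minkowski_of_isCompact (hl : l ∈ Ioo (0 : ℝ) 1) {A B S : Set ℝ}
    (hA : IsCompact A) (hB : IsCompact B) (hA₀ : A.Nonempty) (hB₀ : B.Nonempty)
    (hS : ∀ x ∈ A, ∀ y ∈ B, l * x + (1 - l) * y ∈ S) :
    ENNReal.ofReal l * volume A + ENNReal.ofReal (1 - l) * volume B ≤ volume S := by
  obtain ⟨hl0, hl1⟩ := hl
  have ha : sSup A ∈ A := hA.sSup_mem hA₀
  have hb : sInf B ∈ B := hB.sInf_mem hB₀
  set z := l * sSup A + (1 - l) * sInf B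
  -- Homothetic copies of `A` and `B` inside `S` meeting only at `z`, so their volumes add up.
  set P := AffineMap.homothety (sInf B) l '' A
  set Q := AffineMap.homothety (sSup A) (1 - l) '' B
  have hP : P ⊆ S ∩ Iic z := by
    rintro _ ⟨x, hx, rfl⟩
    have hxa : x ≤ sSup A := le_csSup hA.bddAbove hx
    refine ⟨?_, ?_⟩
    · convert hS x hx _ hb using 1
      simp [AffineMap.homothety_apply]
      ring
    · simp only [AffineMap.homothety_apply, vsub_eq_sub, smul_eq_mul, vadd_eq_add, mem_Iic, z]
      nlinarith
  have hQ : Q ⊆ S ∩ Ici z := by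
    rintro _ ⟨y, hy, rfl⟩
    have hyb : sInf B ≤ y := csInf_le hB.bddBelow hy
    refine ⟨?_, ?_⟩
    · convert hS _ ha y hy using 1
      simp [AffineMap.homothety_apply]
      ring
    · simp only [AffineMap.homothety_apply, vsub_eq_sub, smul_eq_mul, vadd_eq_add, mem_Ici, z]
      nlinarith
  have hPQ : volume (P ∩ Q) = 0 :=
    measure_mono_null (fun w hw => le_antisymm (hP hw.1).2 (hQ hw.2).2) (measure_singleton z)
  have hQm : MeasurableSet Q := (hB.image (AffineMap.homothety_continuous _ _)).measurableSet
  calc ENNReal.ofReal l * volume A + ENNReal.ofReal (1 - l) * volume B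
      = volume P + volume Q := by
        simp [P, Q, abs_of_pos hl0, abs_of_pos (sub_pos.2 hl1)]
    _ = volume (P ∪ Q) := by rw [← measure_union_add_inter P hQm, hPQ, add_zero]
    _ ≤ volume S :=
        measure_mono (union_subset (hP.trans inter_subset_left) (hQ.trans inter_subset_left))

theorem brunn_minkowski (hl : l ∈ Ioo (0 : ℝ) 1) {A B S : Set ℝ}
    (hA : MeasurableSet A) (hB : MeasurableSet B) (hA₀ : A.Nonempty) (hB₀ : B.Nonempty)
    (hS : ∀ x ∈ A, ∀ y ∈ B, l * x + (1 - l) * y ∈ S) :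
    ENNReal.ofReal l * volume A + ENNReal.ofReal (1 - l) * volume B ≤ volume S := by
  obtain ⟨a, ha⟩ := hA₀
  obtain ⟨b, hb⟩ := hB₀
  have hinner {C : Set ℝ} (hC : MeasurableSet C) :
      volume C = ⨆ K : {K : Set ℝ // K ⊆ C ∧ IsCompact K}, volume (K : Set ℝ) := by
    rw [hC.measure_eq_iSup_isCompact]
    simp_rw [iSup_and', iSup_subtype']
  have hne (C : Set ℝ) : Nonempty {K : Set ℝ // K ⊆ C ∧ IsCompact K} :=
    ⟨⟨∅, empty_subset C, isCompact_empty⟩⟩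
  rw [hinner hA, hinner hB, ENNReal.mul_iSup, ENNReal.mul_iSup]
  refine ENNReal.iSup_add_iSup_le fun ⟨K₁, hK₁A, hK₁⟩ ⟨K₂, hK₂B, hK₂⟩ => ?_
  -- Adding a point makes the compact sets nonempty without changing their volume.
  rw [← measure_congr (insert_ae_eq_self a K₁), ← measure_congr (insert_ae_eq_self b K₂)]
  exact brunn_minkowski_of_isCompact hl (hK₁.insert a) (hK₂.insert b) (insert_nonempty _ _)
    (insert_nonempty _ _) fun x hx y hy =>
      hS x (insert_subset ha hK₁A hx) y (insert_subset hb hK₂B hy)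

theorem prekopa_leindler_of_iSup_eq_one (hl : l ∈ Ioo (0 : ℝ) 1) {f g h : ℝ → ℝ≥0∞}
    (hf : Measurable f) (hg : Measurable g) (hh : Measurable h)
    (hf₁ : ⨆ x, f x = 1) (hg₁ : ⨆ x, g x = 1)
    (hfgh : ∀ x y, f x ^ l * g y ^ (1 - l) ≤ h (l * x + (1 - l) * y)) :
    (∫⁻ x, f x) ^ l * (∫⁻ x, g x) ^ (1 - l) ≤ ∫⁻ x, h x := by
  have hl' : 0 < 1 - l := sub_pos.2 hl.2
  have hlevel : ∀ t ∈ Ioo (0 : ℝ) 1,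
      ENNReal.ofReal l * volume {x | ENNReal.ofReal t < f x}
        + ENNReal.ofReal (1 - l) * volume {y | ENNReal.ofReal t < g y}
        ≤ volume {z | ENNReal.ofReal t < h z} := by
    intro t ht
    have ht₁ : ENNReal.ofReal t < 1 := ENNReal.ofReal_lt_one.2 ht.2
    have ht₀ : ENNReal.ofReal t ≠ 0 := (ENNReal.ofReal_pos.2 ht.1).ne'
    obtain ⟨x₀, hx₀⟩ := lt_iSup_iff.1 (hf₁ ▸ ht₁)
    obtain ⟨y₀, hy₀⟩ := lt_iSup_iff.1 (hg₁ ▸ ht₁)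
    refine brunn_minkowski hl (measurableSet_lt measurable_const hf)
      (measurableSet_lt measurable_const hg) ⟨x₀, hx₀⟩ ⟨y₀, hy₀⟩ fun x hx y hy => ?_
    calc ENNReal.ofReal t = ENNReal.ofReal t ^ l * ENNReal.ofReal t ^ (1 - l) := by
          rw [← ENNReal.rpow_add _ _ ht₀ ENNReal.ofReal_ne_top, add_sub_cancel,
            ENNReal.rpow_one]
      _ < f x ^ l * g y ^ (1 - l) :=
          ENNReal.mul_lt_mul (ENNReal.rpow_lt_rpow hx hl.1) (ENNReal.rpow_lt_rpow hy hl')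
      _ ≤ h (l * x + (1 - l) * y) := hfgh x y
  have hf_le x : f x ≤ 1 := hf₁ ▸ le_iSup f x
  have hg_le x : g x ≤ 1 := hg₁ ▸ le_iSup g x
  calc (∫⁻ x, f x) ^ l * (∫⁻ x, g x) ^ (1 - l)
      ≤ ENNReal.ofReal l * (∫⁻ x, f x) + ENNReal.ofReal (1 - l) * ∫⁻ x, g x :=
        ENNReal.rpow_mul_rpow_le_add hl _ _
    _ = (∫⁻ t in Ioo 0 1, ENNReal.ofReal l * volume {x | ENNReal.ofReal t < f x})
          + ∫⁻ t in Ioo 0 1, ENNReal.ofReal (1 - l) * volume {y | ENNReal.ofReal t < g y} := by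
        rw [lintegral_eq_setLIntegral_Ioo_meas_lt volume hf hf_le,
          lintegral_eq_setLIntegral_Ioo_meas_lt volume hg hg_le,
          lintegral_const_mul' _ _ ENNReal.ofReal_ne_top,
          lintegral_const_mul' _ _ ENNReal.ofReal_ne_top]
    _ ≤ ∫⁻ t in Ioo 0 1, (ENNReal.ofReal l * volume {x | ENNReal.ofReal t < f x}
          + ENNReal.ofReal (1 - l) * volume {y | ENNReal.ofReal t < g y}) :=
        le_lintegral_add _ _
    _ ≤ ∫⁻ t in Ioo 0 1, volume {z | ENNReal.ofReal t < h z} :=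
        setLIntegral_mono' measurableSet_Ioo hlevel
    _ = ∫⁻ z, min (h z) 1 := by
        rw [lintegral_eq_setLIntegral_Ioo_meas_lt volume (hh.min measurable_const)
          fun _ => min_le_right _ _]
        refine setLIntegral_congr_fun measurableSet_Ioo fun t ht => ?_
        simp [ENNReal.ofReal_lt_one.2 ht.2]
    _ ≤ ∫⁻ z, h z := lintegral_mono fun z => min_le_left _ _

theorem prekopa_leindler (hl : l ∈ Ioo (0 : ℝ) 1) {f g h : ℝ → ℝ≥0∞}
    (hf : Measurable f) (hg : Measurable g) (hh : Measurable h)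
    (hf_bdd : ⨆ x, f x ≠ ∞) (hg_bdd : ⨆ x, g x ≠ ∞)
    (hfgh : ∀ x y, f x ^ l * g y ^ (1 - l) ≤ h (l * x + (1 - l) * y)) :
    (∫⁻ x, f x) ^ l * (∫⁻ x, g x) ^ (1 - l) ≤ ∫⁻ x, h x := by
  obtain ⟨hl0, hl1⟩ := hl
  have hl' : 0 < 1 - l := sub_pos.2 hl1
  rcases eq_or_ne (⨆ x, f x) 0 with hf₀ | hf₀
  · simp [ENNReal.iSup_eq_zero.1 hf₀, ENNReal.zero_rpow_of_pos hl0]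
  rcases eq_or_ne (⨆ x, g x) 0 with hg₀ | hg₀
  · simp [ENNReal.iSup_eq_zero.1 hg₀, ENNReal.zero_rpow_of_pos hl']
  set c := (⨆ x, f x)⁻¹ ^ l * (⨆ x, g x)⁻¹ ^ (1 - l)
  have hc₀ : c ≠ 0 := mul_ne_zero
    (ENNReal.rpow_pos (ENNReal.inv_pos.2 hf_bdd) (ENNReal.inv_ne_top.2 hf₀)).ne'
    (ENNReal.rpow_pos (ENNReal.inv_pos.2 hg_bdd) (ENNReal.inv_ne_top.2 hg₀)).ne'
  have hc_top : c ≠ ∞ := ENNReal.mul_ne_top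
    (ENNReal.rpow_ne_top_of_nonneg hl0.le (ENNReal.inv_ne_top.2 hf₀))
    (ENNReal.rpow_ne_top_of_nonneg hl'.le (ENNReal.inv_ne_top.2 hg₀))
  have key := prekopa_leindler_of_iSup_eq_one ⟨hl0, hl1⟩ (hf.const_mul (⨆ x, f x)⁻¹)
    (hg.const_mul (⨆ x, g x)⁻¹) (hh.const_mul c)
    (by rw [← ENNReal.mul_iSup, ENNReal.inv_mul_cancel hf₀ hf_bdd])
    (by rw [← ENNReal.mul_iSup, ENNReal.inv_mul_cancel hg₀ hg_bdd]) fun x y => by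
      rw [ENNReal.mul_rpow_of_nonneg _ _ hl0.le, ENNReal.mul_rpow_of_nonneg _ _ hl'.le,
        mul_mul_mul_comm]
      gcongr
      exact hfgh x y
  rw [lintegral_const_mul _ hf, lintegral_const_mul _ hg, lintegral_const_mul _ hh,
    ENNReal.mul_rpow_of_nonneg _ _ hl0.le, ENNReal.mul_rpow_of_nonneg _ _ hl'.le,
    mul_mul_mul_comm] at key
  exact (ENNReal.mul_le_mul_iff_right hc₀ hc_top).1 key

theorem mul_exp_neg_rpow_mul_rpow_le (hl : l ∈ Icc (0 : ℝ) 1) {s t : ℝ} (hs : 0 ≤ s)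
    (ht : 0 ≤ t) :
    (s * exp (-s)) ^ l * (t * exp (-t)) ^ (1 - l)
      ≤ s ^ l * t ^ (1 - l) * exp (-(s ^ l * t ^ (1 - l))) := by
  have hl' : 0 ≤ 1 - l := sub_nonneg.2 hl.2
  calc (s * exp (-s)) ^ l * (t * exp (-t)) ^ (1 - l)
      = s ^ l * t ^ (1 - l) * exp (-(l * s + (1 - l) * t)) := by
        rw [mul_rpow hs (exp_pos _).le, mul_rpow ht (exp_pos _).le, ← exp_mul, ← exp_mul,
          show -(l * s + (1 - l) * t) = -s * l + -t * (1 - l) by ring, exp_add]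
        ring
    _ ≤ s ^ l * t ^ (1 - l) * exp (-(s ^ l * t ^ (1 - l))) := by
        gcongr
        exact geom_mean_le_arith_mean2_weighted hl.1 hl' hs ht (by ring)

end Real

lemma lintegral_comp_exp (g : ℝ → ℝ≥0∞) :
    ∫⁻ u, ENNReal.ofReal (exp u) * g (exp u) = ∫⁻ r in Ioi 0, g r := by
  rw [← range_exp, ← image_univ]
  simpa [abs_of_pos (exp_pos _)] using (lintegral_image_eq_lintegral_abs_deriv_mul
    MeasurableSet.univ (fun x _ => (hasDerivAt_exp x).hasDerivWithinAt) exp_injective.injOn g).symm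

lemma lintegral_Ici_ofReal_mul_exp_neg_mul {a : ℝ} (ha : 0 < a) (c : ℝ) :
    ∫⁻ r in Ici c, ENNReal.ofReal (a * exp (-(a * r))) = ENNReal.ofReal (exp (-(a * c))) := by
  have hint : IntegrableOn (fun r => a * exp (-(a * r))) (Ioi c) := by
    simpa only [neg_mul, IntegrableOn] using
      (integrableOn_exp_mul_Ioi (neg_neg_of_pos ha) c).const_mul a
  rw [← setLIntegral_congr Ioi_ae_eq_Ici, ← ofReal_integral_eq_lintegral_ofReal hint
    (ae_of_all _ fun _ => by positivity), integral_const_mul]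
  simp only [← neg_mul, integral_exp_mul_Ioi (neg_neg_of_pos ha)]
  congr 1
  field_simp

section ExpProfile

variable {X : Type*} [MeasurableSpace X]

/-- The integrand in `u` of `∫⁻ x, exp (-(a * φ x)) ∂ν` after the layer-cake decomposition in
the level `r = exp u`. -/
def expProfile (ν : Measure X) (φ : X → ℝ) (a u : ℝ) : ℝ≥0∞ :=
  ENNReal.ofReal (a * exp u * exp (-(a * exp u))) * ν {x | φ x ≤ exp u}

lemma measurable_expProfile (ν : Measure X) (φ : X → ℝ) (a : ℝ) :
    Measurable (expProfile ν φ a) :=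
  (ENNReal.measurable_ofReal.comp (by fun_prop)).mul
    (Monotone.measurable fun _ _ huv => measure_mono fun _ hx => le_trans hx (exp_le_exp.2 huv))

lemma expProfile_le_measure_univ (ν : Measure X) (φ : X → ℝ) (a u : ℝ) :
    expProfile ν φ a u ≤ ν univ := by
  refine (mul_le_mul' (ENNReal.ofReal_le_one.2 ?_) (measure_mono (subset_univ _))).trans_eq
    (one_mul _)
  rw [exp_neg, ← div_eq_mul_inv, div_le_one (exp_pos _)]
  linarith [add_one_le_exp (a * exp u)]

lemma lintegral_exp_neg_mul_le_measure_univ (ν : Measure X) {φ : X → ℝ} (hφ₀ : ∀ x, 0 ≤ φ x)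
    {a : ℝ} (ha : 0 ≤ a) : ∫⁻ x, ENNReal.ofReal (exp (-(a * φ x))) ∂ν ≤ ν univ :=
  (lintegral_mono fun x => ENNReal.ofReal_le_one.2 (exp_le_one_iff.2 (neg_nonpos.2
    (mul_nonneg ha (hφ₀ x))))).trans_eq lintegral_one

lemma integral_exp_neg_mul_eq_toReal_lintegral (ν : Measure X) {φ : X → ℝ} (hφ : Measurable φ)
    (a : ℝ) :
    ∫ x, exp (-(a * φ x)) ∂ν = (∫⁻ x, ENNReal.ofReal (exp (-(a * φ x))) ∂ν).toReal :=
  integral_eq_lintegral_of_nonneg_ae (ae_of_all _ fun _ => (exp_pos _).le)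
    (by fun_prop : Measurable fun x => exp (-(a * φ x))).aestronglyMeasurable

theorem lintegral_exp_neg_mul_eq_lintegral_expProfile (ν : Measure X) [SFinite ν] {φ : X → ℝ}
    (hφ : Measurable φ) (hφ₀ : ∀ x, 0 ≤ φ x) {a : ℝ} (ha : 0 < a) :
    ∫⁻ x, ENNReal.ofReal (exp (-(a * φ x))) ∂ν = ∫⁻ u, expProfile ν φ a u := by
  set w : ℝ → ℝ≥0∞ := fun r => ENNReal.ofReal (a * exp (-(a * r)))
  have hw : Measurable w := ENNReal.measurable_ofReal.comp (by fun_prop)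
  have htail x : ∫⁻ r in Ici 0, {y | φ y ≤ r}.indicator (fun _ => w r) x
      = ENNReal.ofReal (exp (-(a * φ x))) := by
    have : (fun r => {y | φ y ≤ r}.indicator (fun _ => w r) x) = (Ici (φ x)).indicator w := by
      ext r
      simp [indicator_apply]
    rw [this, lintegral_indicator measurableSet_Ici, Measure.restrict_restrict measurableSet_Ici,
      Ici_inter_Ici, max_eq_left (hφ₀ x), lintegral_Ici_ofReal_mul_exp_neg_mul ha]
  calc ∫⁻ x, ENNReal.ofReal (exp (-(a * φ x))) ∂ν
      = ∫⁻ x, (∫⁻ r in Ici 0, {y | φ y ≤ r}.indicator (fun _ => w r) x) ∂ν :=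
        lintegral_congr fun x => (htail x).symm
    _ = ∫⁻ r in Ici 0, (∫⁻ x, {y | φ y ≤ r}.indicator (fun _ => w r) x ∂ν) := by
        refine lintegral_lintegral_swap (Measurable.aemeasurable ?_)
        exact (hw.comp measurable_snd).indicator
          (measurableSet_le (hφ.comp measurable_fst) measurable_snd)
    _ = ∫⁻ r in Ioi 0, w r * ν {x | φ x ≤ r} := by
        rw [setLIntegral_congr Ioi_ae_eq_Ici.symm]
        congr! 2 with r
        exact lintegral_indicator_const (measurableSet_le hφ measurable_const) _
    _ = ∫⁻ u, expProfile ν φ a u := by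
        rw [← lintegral_comp_exp]
        refine lintegral_congr fun u => ?_
        rw [expProfile, ← mul_assoc, ← ENNReal.ofReal_mul (exp_pos u).le]
        ring_nf

theorem expProfile_rpow_mul_rpow_le {ν₁ ν₂ ν : Measure X} {φ : X → ℝ} {l a₁ a₂ : ℝ}
    (hl : l ∈ Ioo (0 : ℝ) 1) (ha₁ : 0 < a₁) (ha₂ : 0 < a₂)
    (hν : ∀ r₁ r₂ : ℝ, 0 < r₁ → 0 < r₂ →
      ν₁ {x | φ x ≤ r₁} ^ l * ν₂ {x | φ x ≤ r₂} ^ (1 - l) ≤ ν {x | φ x ≤ r₁ ^ l * r₂ ^ (1 - l)})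
    (u v : ℝ) :
    expProfile ν₁ φ a₁ u ^ l * expProfile ν₂ φ a₂ v ^ (1 - l)
      ≤ expProfile ν φ (a₁ ^ l * a₂ ^ (1 - l)) (l * u + (1 - l) * v) := by
  obtain ⟨hl0, hl1⟩ := hl
  have hl' : 0 < 1 - l := sub_pos.2 hl1
  have hexp : exp (l * u + (1 - l) * v) = exp u ^ l * exp v ^ (1 - l) := by
    rw [← exp_mul, ← exp_mul, ← exp_add]
    ring_nf
  have hlevel : a₁ ^ l * a₂ ^ (1 - l) * exp (l * u + (1 - l) * v)
      = (a₁ * exp u) ^ l * (a₂ * exp v) ^ (1 - l) := by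
    rw [hexp, mul_rpow ha₁.le (exp_pos u).le, mul_rpow ha₂.le (exp_pos v).le]
    ring
  simp only [expProfile]
  rw [ENNReal.mul_rpow_of_nonneg _ _ hl0.le, ENNReal.mul_rpow_of_nonneg _ _ hl'.le,
    mul_mul_mul_comm]
  gcongr
  · rw [ENNReal.ofReal_rpow_of_nonneg (by positivity) hl0.le,
      ENNReal.ofReal_rpow_of_nonneg (by positivity) hl'.le, ← ENNReal.ofReal_mul (by positivity),
      hlevel]
    exact ENNReal.ofReal_le_ofReal (Real.mul_exp_neg_rpow_mul_rpow_le ⟨hl0.le, hl1.le⟩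
      (by positivity) (by positivity))
  · simpa only [hexp] using hν _ _ (exp_pos u) (exp_pos v)

end ExpProfile

section LogComb

variable {n : ℕ}

theorem abs_suppFun_le {K : Set (EuclideanSpace ℝ (Fin n))} {R : ℝ} (hR : 0 ≤ R)
    (hK : K ⊆ Metric.closedBall 0 R) {u : EuclideanSpace ℝ (Fin n)} (hu : ‖u‖ = 1) :
    |suppFun K u| ≤ R := by
  have hbound : ∀ t ∈ (fun y => inner ℝ u y) '' K, |t| ≤ R := by
    rintro _ ⟨y, hy, rfl⟩
    calc |inner ℝ u y| ≤ ‖u‖ * ‖y‖ := abs_real_inner_le_norm u y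
      _ ≤ R := by rw [hu, one_mul]; exact mem_closedBall_zero_iff.1 (hK hy)
  unfold suppFun
  rw [abs_le]
  refine ⟨?_, Real.sSup_le (fun t ht => (abs_le.1 (hbound t ht)).2) hR⟩
  rcases K.eq_empty_or_nonempty with rfl | ⟨y, hy⟩
  · simp [hR]
  · exact le_csSup_of_le ⟨R, fun t ht => (abs_le.1 (hbound t ht)).2⟩ (mem_image_of_mem _ hy)
      (abs_le.1 (hbound _ (mem_image_of_mem _ hy))).1

theorem isClosed_logComb (lam : ℝ) (K L : Set (EuclideanSpace ℝ (Fin n))) :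
    IsClosed (logComb lam K L) := by
  simp only [logComb, ofPred_forall]
  exact isClosed_iInter fun u => isClosed_iInter fun _ =>
    isClosed_le (continuous_id.inner continuous_const) continuous_const

theorem logComb_subset_closedBall {lam : ℝ} (hlam : lam ∈ Icc (0 : ℝ) 1)
    {K L : Set (EuclideanSpace ℝ (Fin n))} {R₁ R₂ : ℝ} (hR₁ : 0 ≤ R₁) (hR₂ : 0 ≤ R₂)
    (hK : K ⊆ Metric.closedBall 0 R₁) (hL : L ⊆ Metric.closedBall 0 R₂) :
    logComb lam K L ⊆ Metric.closedBall 0 (R₁ ^ lam * R₂ ^ (1 - lam)) := by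
  have hlam' : 0 ≤ 1 - lam := sub_nonneg.2 hlam.2
  intro x hx
  rw [mem_closedBall_zero_iff]
  rcases eq_or_ne x 0 with rfl | hx₀
  · rw [norm_zero]
    positivity
  set u := ‖x‖⁻¹ • x
  have hu : ‖u‖ = 1 := norm_smul_inv_norm hx₀
  calc ‖x‖ = inner ℝ x u := by
        rw [real_inner_smul_right, real_inner_self_eq_norm_sq]
        field_simp [norm_ne_zero_iff.2 hx₀]
    _ ≤ |suppFun K u ^ lam * suppFun L u ^ (1 - lam)| := (hx u hu).trans (le_abs_self _)
    _ ≤ |suppFun K u| ^ lam * |suppFun L u| ^ (1 - lam) := by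
        rw [abs_mul]
        exact mul_le_mul (abs_rpow_le_abs_rpow _ _) (abs_rpow_le_abs_rpow _ _) (abs_nonneg _)
          (by positivity)
    _ ≤ R₁ ^ lam * R₂ ^ (1 - lam) := by
        gcongr
        exacts [hlam.1, abs_suppFun_le hR₁ hK hu, abs_suppFun_le hR₂ hL hu]

theorem isCompact_logComb {lam : ℝ} (hlam : lam ∈ Icc (0 : ℝ) 1)
    {K L : Set (EuclideanSpace ℝ (Fin n))} (hK : IsCompact K) (hL : IsCompact L) :
    IsCompact (logComb lam K L) := by
  obtain ⟨R₁, hR₁, hK'⟩ := hK.isBounded.subset_closedBall_lt 0 0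
  obtain ⟨R₂, hR₂, hL'⟩ := hL.isBounded.subset_closedBall_lt 0 0
  exact (isCompact_closedBall 0 _).of_isClosed_subset (isClosed_logComb lam K L)
    (logComb_subset_closedBall hlam hR₁.le hR₂.le hK' hL')

end LogComb

theorem logBM_from_sublevel_hypothesis_general (n : ℕ)
    (lam a₁ a₂ : ℝ) (hlam : lam ∈ Set.Ioo (0:ℝ) 1) (ha₁ : 0 < a₁) (ha₂ : 0 < a₂)
    (μ : Measure (EuclideanSpace ℝ (Fin n))) [IsFiniteMeasureOnCompacts μ]
    (φ : EuclideanSpace ℝ (Fin n) → ℝ) (hφ0 : ∀ x, 0 ≤ φ x)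
    (hconv : ConvexOn ℝ Set.univ φ)
    (K L : Set (EuclideanSpace ℝ (Fin n)))
    (hK : IsConvexBody K) (hL : IsConvexBody L)
    (hyp : ∀ r₁ r₂ : ℝ, 0 < r₁ → 0 < r₂ →
      μ (K ∩ {x | φ x ≤ r₁}) ^ lam * μ (L ∩ {x | φ x ≤ r₂}) ^ (1 - lam)
        ≤ μ (logComb lam K L ∩ {x | φ x ≤ r₁ ^ lam * r₂ ^ (1 - lam)})) :
    (∫ x in K, Real.exp (-(a₁ * φ x)) ∂μ) ^ lam *
        (∫ x in L, Real.exp (-(a₂ * φ x)) ∂μ) ^ (1 - lam)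
      ≤ ∫ x in logComb lam K L, Real.exp (-((a₁ ^ lam * a₂ ^ (1 - lam)) * φ x)) ∂μ := by
  have hφ : Measurable φ := (continuousOn_univ.1 (hconv.continuousOn isOpen_univ)).measurable
  have hfinite {S} (hS : IsCompact S) : μ.restrict S univ ≠ ∞ := by
    simpa using hS.measure_lt_top.ne
  have hres (S : Set (EuclideanSpace ℝ (Fin n))) (r : ℝ) :
      μ.restrict S {x | φ x ≤ r} = μ (S ∩ {x | φ x ≤ r}) := by
    rw [Measure.restrict_apply (measurableSet_le hφ measurable_const), inter_comm]
  have hPL := Real.prekopa_leindler hlam (measurable_expProfile _ _ _)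
    (measurable_expProfile _ _ _) (measurable_expProfile _ _ _)
    (ne_top_of_le_ne_top (hfinite hK.2.1) (iSup_le (expProfile_le_measure_univ _ _ _)))
    (ne_top_of_le_ne_top (hfinite hL.2.1) (iSup_le (expProfile_le_measure_univ _ _ _)))
    (expProfile_rpow_mul_rpow_le (φ := φ) (ν := μ.restrict (logComb lam K L)) hlam ha₁ ha₂
      (by simpa only [hres] using hyp))
  rw [← lintegral_exp_neg_mul_eq_lintegral_expProfile _ hφ hφ0 ha₁,
    ← lintegral_exp_neg_mul_eq_lintegral_expProfile _ hφ hφ0 ha₂,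
    ← lintegral_exp_neg_mul_eq_lintegral_expProfile _ hφ hφ0 (by positivity)] at hPL
  simp only [integral_exp_neg_mul_eq_toReal_lintegral _ hφ]
  rw [ENNReal.toReal_rpow, ENNReal.toReal_rpow, ← ENNReal.toReal_mul]
  exact ENNReal.toReal_mono (ne_top_of_le_ne_top
    (hfinite (isCompact_logComb (Ioo_subset_Icc_self hlam) hK.2.1 hL.2.1))
    (lintegral_exp_neg_mul_le_measure_univ _ hφ0 (by positivity))) hPL

/-- Lemma 3.3: from a log-Brunn-Minkowski-type hypothesis on sublevel truncations
to an integral inequality for exponential weights. -/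
theorem logBM_from_sublevel_hypothesis (n : ℕ)
    (lam a₁ a₂ : ℝ) (hlam : lam ∈ Set.Ioo (0:ℝ) 1) (ha₁ : 0 < a₁) (ha₂ : 0 < a₂)
    (μ : Measure (EuclideanSpace ℝ (Fin n))) [IsFiniteMeasureOnCompacts μ]
    (φ : EuclideanSpace ℝ (Fin n) → ℝ) (hφ0 : ∀ x, 0 ≤ φ x)
    (heven : ∀ x, φ (-x) = φ x) (hconv : ConvexOn ℝ Set.univ φ)
    (K L : Set (EuclideanSpace ℝ (Fin n)))
    (hK : IsConvexBody K) (hKs : K = -K) (hL : IsConvexBody L) (hLs : L = -L)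
    (hyp : ∀ r₁ r₂ : ℝ, 0 < r₁ → 0 < r₂ →
      μ (K ∩ {x | φ x ≤ r₁}) ^ lam * μ (L ∩ {x | φ x ≤ r₂}) ^ (1 - lam)
        ≤ μ (logComb lam K L ∩ {x | φ x ≤ r₁ ^ lam * r₂ ^ (1 - lam)})) :
    (∫ x in K, Real.exp (-(a₁ * φ x)) ∂μ) ^ lam *
        (∫ x in L, Real.exp (-(a₂ * φ x)) ∂μ) ^ (1 - lam)
      ≤ ∫ x in logComb lam K L, Real.exp (-((a₁ ^ lam * a₂ ^ (1 - lam)) * φ x)) ∂μ :=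
  logBM_from_sublevel_hypothesis_general n lam a₁ a₂ hlam ha₁ ha₂ μ φ hφ0 hconv K L hK hL hyp
end
end

section
/- Let λ ∈ [0,1], let K, L be convex bodies in ℝⁿ containing the origin in their interiors, and let H be a linear subspace of ℝⁿ. Then {x ∈ H : ⟨x,u⟩ ≤ h_{K∩H}(u)^λ · h_{L∩H}(u)^{1−λ} for every u ∈ H} ⊆ (λ·K +₀ (1−λ)·L) ∩ H; that is, the logarithmic combination of K∩H and L∩H taken within the subspace H is contained in (λ·K +₀ (1−λ)·L) ∩ H. -/
open MeasureTheory Set Pointwise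

noncomputable section

/-! Restricting a point `x ∈ H` to test directions in `H` loses nothing: for any `u`,
`⟪x, u⟫ = ⟪x, P u⟫` with `P` the orthogonal projection onto `H`, and `h_{K ∩ H}(P u) = h_{K ∩ H}(u)`.
Since `K ∩ H ⊆ K` and both support functions are nonnegative (the origin lies in `K ∩ H`),
the weighted geometric mean of the section support functions is dominated by that of `h_K, h_L`. -/

section SupportFunction

variable {n : ℕ}

lemma bddAbove_inner_image {K : Set (EuclideanSpace ℝ (Fin n))} (hK : IsCompact K)
    (u : EuclideanSpace ℝ (Fin n)) : BddAbove ((fun y => (inner ℝ u y : ℝ)) '' K) :=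
  (hK.image (continuous_const.inner continuous_id)).bddAbove

lemma suppFun_nonneg {K : Set (EuclideanSpace ℝ (Fin n))} (hK : IsCompact K) (h0 : 0 ∈ K)
    (u : EuclideanSpace ℝ (Fin n)) : 0 ≤ suppFun K u :=
  le_csSup (bddAbove_inner_image hK u) ⟨0, h0, inner_zero_right u⟩

lemma suppFun_mono {K L : Set (EuclideanSpace ℝ (Fin n))} (hL : IsCompact L) (hK : K.Nonempty)
    (hKL : K ⊆ L) (u : EuclideanSpace ℝ (Fin n)) : suppFun K u ≤ suppFun L u :=
  csSup_le_csSup (bddAbove_inner_image hL u) (hK.image _) (image_mono hKL)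

lemma suppFun_inter_starProjection (K : Set (EuclideanSpace ℝ (Fin n)))
    (H : Submodule ℝ (EuclideanSpace ℝ (Fin n))) (u : EuclideanSpace ℝ (Fin n)) :
    suppFun (K ∩ H) (H.starProjection u) = suppFun (K ∩ H) u := by
  refine congrArg sSup (image_congr fun y hy => ?_)
  rw [H.inner_starProjection_left_eq_right, H.starProjection_eq_self_iff.mpr hy.2]

lemma suppFun_inter_submodule_nonneg_and_le {K : Set (EuclideanSpace ℝ (Fin n))}
    (hK : IsCompact K) (h0 : 0 ∈ K) (H : Submodule ℝ (EuclideanSpace ℝ (Fin n)))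
    (u : EuclideanSpace ℝ (Fin n)) :
    0 ≤ suppFun (K ∩ H) u ∧ suppFun (K ∩ H) u ≤ suppFun K u :=
  have h0H : (0 : EuclideanSpace ℝ (Fin n)) ∈ K ∩ H := ⟨h0, H.zero_mem⟩
  ⟨suppFun_nonneg (hK.inter_right H.closed_of_finiteDimensional) h0H u,
    suppFun_mono hK ⟨0, h0H⟩ inter_subset_left u⟩

end SupportFunction

/-- Lemma 6.5: the logarithmic combination of sections is contained in the section of the
logarithmic combination. -/
theorem logComb_sections_subset (n : ℕ) (lam : ℝ) (hlam : lam ∈ Set.Icc (0:ℝ) 1)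
    (K L : Set (EuclideanSpace ℝ (Fin n)))
    (hK : IsConvexBody K) (hK0 : (0 : EuclideanSpace ℝ (Fin n)) ∈ interior K)
    (hL : IsConvexBody L) (hL0 : (0 : EuclideanSpace ℝ (Fin n)) ∈ interior L)
    (H : Submodule ℝ (EuclideanSpace ℝ (Fin n))) :
    {x : EuclideanSpace ℝ (Fin n) | x ∈ H ∧ ∀ u ∈ H,
        (inner ℝ x u : ℝ) ≤ suppFun (K ∩ (H : Set (EuclideanSpace ℝ (Fin n)))) u ^ lam *
          suppFun (L ∩ (H : Set (EuclideanSpace ℝ (Fin n)))) u ^ (1 - lam)}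
      ⊆ logComb lam K L ∩ (H : Set (EuclideanSpace ℝ (Fin n))) := by
  rintro x ⟨hxH, hx⟩
  refine ⟨fun u _ => ?_, hxH⟩
  obtain ⟨hKH0, hKH⟩ := suppFun_inter_submodule_nonneg_and_le hK.2.1 (interior_subset hK0) H u
  obtain ⟨hLH0, hLH⟩ := suppFun_inter_submodule_nonneg_and_le hL.2.1 (interior_subset hL0) H u
  obtain ⟨hlam0, hlam1⟩ := hlam
  calc (inner ℝ x u : ℝ) = inner ℝ x (H.starProjection u) := by
        rw [← H.inner_starProjection_left_eq_right, H.starProjection_eq_self_iff.mpr hxH]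
    _ ≤ suppFun (K ∩ H) (H.starProjection u) ^ lam *
          suppFun (L ∩ H) (H.starProjection u) ^ (1 - lam) :=
        hx _ (H.starProjection_apply_mem u)
    _ = suppFun (K ∩ H) u ^ lam * suppFun (L ∩ H) u ^ (1 - lam) := by
        rw [suppFun_inter_starProjection, suppFun_inter_starProjection]
    _ ≤ suppFun K u ^ lam * suppFun L u ^ (1 - lam) :=
        mul_le_mul (Real.rpow_le_rpow hKH0 hKH hlam0)
          (Real.rpow_le_rpow hLH0 hLH (sub_nonneg.mpr hlam1)) (Real.rpow_nonneg hLH0 _)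
          (Real.rpow_nonneg (hKH0.trans hKH) _)
end
end
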